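/- Let Δ = {(η₁,η₂) ∈ ℝ² : η₁ > 0, η₂ > 0, η₁ + η₂ < 1} and ψ(η₁,η₂) = ¼(η₁ ln η₁ + η₂ ln η₂ + (1 − η₁ − η₂) ln(1 − η₁ − η₂)) on Δ. Let X, Y > 0 with X² + Y² < 1 and set Z = √(1 − X² − Y²). Then with J(X,Y) = diag(2X, 2Y) the Jacobian of (X,Y) ↦ (X², Y²), one has J(X,Y)ᵀ · Hess ψ(X², Y²) · J(X,Y) = [[1 + X²/Z², XY/Z²], [XY/Z², 1 + Y²/Z²]], which is the matrix of the round metric of the unit 2-sphere {X² + Y² + Z² = 1} in the chart (X,Y) on the octant X,Y,Z > 0. Hence (X², Y²) are Hessian coordinates for the round sphere with Hessian potential ψ. -/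

import Mathlib

open Real Set Matrix

/-- The Hessian potential of the generic system (s2) on the round 2-sphere
in its Hessian coordinates, defined on the open simplex. -/
noncomputable def ψ (a b : ℝ) : ℝ :=
  (a * log a + b * log b + (1 - a - b) * log (1 - a - b)) / 4

/-- Partial derivative with respect to the first variable. -/
noncomputable def d1 (f : ℝ → ℝ → ℝ) (a b : ℝ) : ℝ := deriv (fun s => f s b) a

/-- Partial derivative with respect to the second variable. -/
noncomputable def d2 (f : ℝ → ℝ → ℝ) (a b : ℝ) : ℝ := deriv (fun t => f a t) b

/-- The matrix of second partial derivatives of a function of two variables. -/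
noncomputable def Hess (f : ℝ → ℝ → ℝ) (a b : ℝ) : Matrix (Fin 2) (Fin 2) ℝ :=
  !![d1 (d1 f) a b, d1 (d2 f) a b;
     d2 (d1 f) a b, d2 (d2 f) a b]

/-- The Jacobian matrix of the coordinate change `(X,Y) ↦ (X², Y²)`. -/
noncomputable def J (x y : ℝ) : Matrix (Fin 2) (Fin 2) ℝ := !![2 * x, 0; 0, 2 * y]

/-!
Write `c = 1 - a - b` for the third barycentric coordinate of the simplex. Then
`ψ = φ(a) + φ(b) + φ(c)` with `φ(t) = t log t / 4`, and since `∂c/∂a = ∂c/∂b = -1` and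
`φ'' t = 1/(4t)`, its Hessian is `diag(1/(4a), 1/(4b)) + (1/(4c)) 𝟙𝟙ᵀ`. Conjugating by the
Jacobian `diag(2X, 2Y)` of `(X,Y) ↦ (X², Y²)` gives `I + (X,Y)(X,Y)ᵀ / c`, and at `(X², Y²)`
the third coordinate is `c = 1 - X² - Y² = Z²`.
-/

lemma d2_eq_d1_flip (f : ℝ → ℝ → ℝ) (a b : ℝ) : d2 f a b = d1 (flip f) b a := rfl

lemma flip_d1 (f : ℝ → ℝ → ℝ) : flip (d1 f) = d2 (flip f) := rfl

lemma flip_d2 (f : ℝ → ℝ → ℝ) : flip (d2 f) = d1 (flip f) := rfl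

lemma HasDerivAt.comp_one_sub_sub {g : ℝ → ℝ} {g' a b : ℝ} (h : HasDerivAt g g' (1 - a - b)) :
    HasDerivAt (fun s => g (1 - s - b)) (-g') a := by
  simp_rw [sub_right_comm (1 : ℝ) _ b] at h ⊢
  exact h.comp_const_sub (1 - b) a

lemma eventually_one_sub_sub_mem {U : Set ℝ} (hU : IsOpen U) {a b : ℝ} (hc : 1 - a - b ∈ U) :
    ∀ᶠ s in nhds a, 1 - s - b ∈ U :=
  (by fun_prop : ContinuousAt (fun s : ℝ => 1 - s - b) a).eventually_mem (hU.mem_nhds hc)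

def barycentricSum (φ : ℝ → ℝ) (a b : ℝ) : ℝ := φ a + φ b + φ (1 - a - b)

lemma flip_barycentricSum (φ : ℝ → ℝ) : flip (barycentricSum φ) = barycentricSum φ := by
  ext a b
  simp only [flip, barycentricSum, sub_right_comm (1 : ℝ) b a]
  ring

lemma ψ_eq_barycentricSum : ψ = barycentricSum fun t => t * log t / 4 := by
  ext a b
  simp only [ψ, barycentricSum]
  ring

section barycentricSum

variable {U : Set ℝ} {φ φ' φ'' : ℝ → ℝ} {a b : ℝ}

lemma d1_barycentricSum (hφ : ∀ t ∈ U, HasDerivAt φ (φ' t) t) (ha : a ∈ U)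
    (hc : 1 - a - b ∈ U) : d1 (barycentricSum φ) a b = φ' a - φ' (1 - a - b) :=
  (((hφ a ha).add_const (φ b)).add (hφ _ hc).comp_one_sub_sub).deriv

lemma d2_barycentricSum (hφ : ∀ t ∈ U, HasDerivAt φ (φ' t) t) (hb : b ∈ U)
    (hc : 1 - a - b ∈ U) : d2 (barycentricSum φ) a b = φ' b - φ' (1 - a - b) := by
  rw [sub_right_comm] at hc ⊢
  rw [d2_eq_d1_flip, flip_barycentricSum, d1_barycentricSum hφ hb hc]

lemma d1_d1_barycentricSum (hU : IsOpen U) (hφ : ∀ t ∈ U, HasDerivAt φ (φ' t) t)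
    (hφ' : ∀ t ∈ U, HasDerivAt φ' (φ'' t) t) (ha : a ∈ U) (hc : 1 - a - b ∈ U) :
    d1 (d1 (barycentricSum φ)) a b = φ'' a + φ'' (1 - a - b) := by
  have hd1 : (fun s => d1 (barycentricSum φ) s b) =ᶠ[nhds a]
      fun s => φ' s - φ' (1 - s - b) := by
    filter_upwards [hU.mem_nhds ha, eventually_one_sub_sub_mem hU hc] with s hs hsc
    exact d1_barycentricSum hφ hs hsc
  rw [d1, hd1.deriv_eq, ((hφ' a ha).fun_sub (hφ' _ hc).comp_one_sub_sub).deriv, sub_neg_eq_add]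

lemma d1_d2_barycentricSum (hU : IsOpen U) (hφ : ∀ t ∈ U, HasDerivAt φ (φ' t) t)
    (hφ' : ∀ t ∈ U, HasDerivAt φ' (φ'' t) t) (hb : b ∈ U) (hc : 1 - a - b ∈ U) :
    d1 (d2 (barycentricSum φ)) a b = φ'' (1 - a - b) := by
  have hd2 : (fun s => d2 (barycentricSum φ) s b) =ᶠ[nhds a]
      fun s => φ' b - φ' (1 - s - b) := by
    filter_upwards [eventually_one_sub_sub_mem hU hc] with s hsc
    exact d2_barycentricSum hφ hb hsc
  rw [d1, hd2.deriv_eq, ((hφ' _ hc).comp_one_sub_sub.const_sub (φ' b)).deriv, neg_neg]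

lemma hess_barycentricSum (hU : IsOpen U) (hφ : ∀ t ∈ U, HasDerivAt φ (φ' t) t)
    (hφ' : ∀ t ∈ U, HasDerivAt φ' (φ'' t) t) (ha : a ∈ U) (hb : b ∈ U) (hc : 1 - a - b ∈ U) :
    Hess (barycentricSum φ) a b =
      !![φ'' a + φ'' (1 - a - b), φ'' (1 - a - b);
         φ'' (1 - a - b), φ'' b + φ'' (1 - a - b)] := by
  have hc' : 1 - b - a ∈ U := by rwa [sub_right_comm]
  -- the second row is the first row at `(b, a)`, by the symmetry of `barycentricSum φ`
  rw [Hess, d2_eq_d1_flip, d2_eq_d1_flip, flip_d1, flip_d2, flip_barycentricSum,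
    d1_d1_barycentricSum hU hφ hφ' ha hc, d1_d2_barycentricSum hU hφ hφ' hb hc,
    d1_d2_barycentricSum hU hφ hφ' ha hc', d1_d1_barycentricSum hU hφ hφ' hb hc',
    sub_right_comm 1 b a]

end barycentricSum

lemma hess_ψ {a b : ℝ} (ha : 0 < a) (hb : 0 < b) (hc : 0 < 1 - a - b) :
    Hess ψ a b =
      !![a⁻¹ / 4 + (1 - a - b)⁻¹ / 4, (1 - a - b)⁻¹ / 4;
         (1 - a - b)⁻¹ / 4, b⁻¹ / 4 + (1 - a - b)⁻¹ / 4] := by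
  rw [ψ_eq_barycentricSum]
  refine hess_barycentricSum (φ' := fun t => (log t + 1) / 4) (φ'' := fun t => t⁻¹ / 4)
    isOpen_Ioi (fun t ht => ?_) (fun t ht => ?_) ha hb hc
  · exact (hasDerivAt_mul_log ht.ne').div_const 4
  · simpa using ((hasDerivAt_log ht.ne').add_const 1).div_const 4

lemma J_transpose_mul_mul_J (x y : ℝ) (M : Matrix (Fin 2) (Fin 2) ℝ) :
    (J x y)ᵀ * M * J x y =
      !![4 * x ^ 2 * M 0 0, 4 * x * y * M 0 1; 4 * x * y * M 1 0, 4 * y ^ 2 * M 1 1] := by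
  ext i j
  fin_cases i <;> fin_cases j <;> simp only [_root_.J, mul_apply, Fin.sum_univ_two,
    transpose_apply, of_apply, cons_val', cons_val_zero, cons_val_one, cons_val_fin_one,
    Fin.isValue, Fin.zero_eta, Fin.mk_one, zero_mul, mul_zero, add_zero, zero_add] <;> ring

/-- `(X², Y²)` are Hessian coordinates for the round metric of the unit
2-sphere on the octant `X, Y, Z > 0`, with Hessian potential `ψ`: with
`Z = √(1 − X² − Y²)`, one has
`J(X,Y)ᵀ · Hess ψ(X²,Y²) · J(X,Y) = [[1 + X²/Z², XY/Z²], [XY/Z², 1 + Y²/Z²]]`,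
the component matrix of the round metric in the chart `(X,Y)`. -/
theorem s2_hessian_coordinates_round_metric :
    ∀ X Y : ℝ, 0 < X → 0 < Y → X ^ 2 + Y ^ 2 < 1 →
      (J X Y)ᵀ * Hess ψ (X ^ 2) (Y ^ 2) * J X Y =
        !![1 + X ^ 2 / Real.sqrt (1 - X ^ 2 - Y ^ 2) ^ 2,
           X * Y / Real.sqrt (1 - X ^ 2 - Y ^ 2) ^ 2;
           X * Y / Real.sqrt (1 - X ^ 2 - Y ^ 2) ^ 2,
           1 + Y ^ 2 / Real.sqrt (1 - X ^ 2 - Y ^ 2) ^ 2] := by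
  intro X Y hX hY hXY
  have hc : 0 < 1 - X ^ 2 - Y ^ 2 := by linarith
  rw [sq_sqrt hc.le, hess_ψ (by positivity) (by positivity) hc, J_transpose_mul_mul_J]
  ext i j
  fin_cases i <;> fin_cases j <;> simp only [of_apply, cons_val', cons_val_zero,
    cons_val_one, cons_val_fin_one, Fin.isValue, Fin.zero_eta, Fin.mk_one] <;> field_simp
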